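/- arXiv:1608.08592 — 4 statements merged into one kernel-verified Lean document; each statement's English description precedes it below -/
import Mathlib

section
/- Let q ≥ 1 and let S be a finite set of words over the alphabet Σ = {x_1, …, x_q}. Then the iterated shuffle S^† is co-finite (i.e., Σ* \ S^† is finite) if and only if for each i ∈ {1, …, q} the collection 𝒯_i is non-empty. -/
/-- `Shuffle u v w` means that the word `w` is an interleaving (shuffle) of the
words `u` and `v`. -/
inductive Shuffle {α : Type*} : List α → List α → List α → Prop
  | nil : Shuffle [] [] []
  | left {a : α} {u v w : List α} : Shuffle u v w → Shuffle (a :: u) v (a :: w)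
  | right {a : α} {u v w : List α} : Shuffle u v w → Shuffle u (a :: v) (a :: w)

/-- `IterShuffle S y` means `y` belongs to the iterated shuffle `S^†`, i.e. `y`
can be obtained by shuffling together finitely many (possibly zero) words of `S`. -/
inductive IterShuffle {α : Type*} (S : Set (List α)) : List α → Prop
  | nil : IterShuffle S []
  | step {u w y : List α} : u ∈ S → IterShuffle S w → Shuffle u w y → IterShuffle S y

/-- `TiNonempty S i` says that the collection `𝒯ᵢ` of subsets `Tᵢ ⊆ S` of the
required form is non-empty: either `{xᵢ} ⊆ S`, or `S` contains words
`xᵢ^{m_{i,1}}, …, xᵢ^{m_{i,hᵢ}}` (with `hᵢ ≥ 2`, all exponents `≥ 2` and of gcd `1`)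
together with words `xᵢ xⱼ^{a_{i,j}}` and `xⱼ^{b_{j,i}} xᵢ` for all `j ≠ i`. -/
def TiNonempty {q : ℕ} (S : Set (List (Fin q))) (i : Fin q) : Prop :=
  [i] ∈ S ∨
    ∃ (M : Finset ℕ) (a b : Fin q → ℕ),
      2 ≤ M.card ∧ (∀ n ∈ M, 2 ≤ n) ∧ M.gcd id = 1 ∧
      (∀ n ∈ M, List.replicate n i ∈ S) ∧
      ∀ j : Fin q, j ≠ i →
        1 ≤ a j ∧ 1 ≤ b j ∧
        i :: List.replicate (a j) j ∈ S ∧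
        List.replicate (b j) j ++ [i] ∈ S

/-!
`S^†` is closed under shuffle, and every word is a shuffle of its one-letter projections
`x_k^{|w|_k}`, so `w ∈ S^†` as soon as each of these powers is. Under the `𝒯`-condition each
letter has all large powers in `S^†` (its powers in `S` generate a numerical semigroup), and a
letter `x_i` occurring too rarely is absorbed, one occurrence at a time, into a letter `x_j`
occurring very often: around any occurrence of `x_i`, either `x_i x_j^a` or `x_j^b x_i` fits.

Conversely, if all words longer than `L` lie in `S^†`, the powers `x_i^{L+1}` and `x_i^{L+2}` force
the powers of `x_i` in `S` to have gcd `1`, and in `x_i x_j^{L+1}` (resp. `x_j^{L+1} x_i`) the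
letter `x_i` can only come from a word `x_i x_j^a` (resp. `x_j^b x_i`) of `S`.
-/

open List

namespace Shuffle

variable {α : Type*} {u v w : List α}

theorem nil_left : ∀ v : List α, Shuffle [] v v
  | [] => .nil
  | _ :: v => .right (nil_left v)

theorem nil_right : ∀ u : List α, Shuffle u [] u
  | [] => .nil
  | _ :: u => .left (nil_right u)

theorem eq_of_nil_left (h : Shuffle [] v w) : v = w := by
  induction w generalizing v with
  | nil => cases h; rfl
  | cons c w ih => cases h with | right h => rw [ih h]

theorem perm_append (h : Shuffle u v w) : u ++ v ~ w := by
  induction h with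
  | nil => exact .nil
  | left _ ih => exact ih.cons _
  | right _ ih => exact perm_middle.trans (ih.cons _)

theorem sublist_left (h : Shuffle u v w) : u <+ w := by
  induction h with
  | nil => exact .slnil
  | left _ ih => exact ih.cons_cons _
  | right _ ih => exact ih.cons _

theorem sublist_right (h : Shuffle u v w) : v <+ w := by
  induction h with
  | nil => exact .slnil
  | left _ ih => exact ih.cons _
  | right _ ih => exact ih.cons_cons _

theorem append {u₁ v₁ w₁ u₂ v₂ w₂ : List α} (h₁ : Shuffle u₁ v₁ w₁) (h₂ : Shuffle u₂ v₂ w₂) :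
    Shuffle (u₁ ++ u₂) (v₁ ++ v₂) (w₁ ++ w₂) := by
  induction h₁ with
  | nil => exact h₂
  | left _ ih => exact .left ih
  | right _ ih => exact .right ih

theorem exists_assoc (h : Shuffle u v w) {a b : List α} (hu : Shuffle a b u) :
    ∃ t, Shuffle b v t ∧ Shuffle a t w := by
  induction h generalizing a b with
  | nil => cases hu; exact ⟨[], .nil, .nil⟩
  | left _ ih =>
    cases hu with
    | left hu =>
      obtain ⟨t, hbt, hat⟩ := ih hu
      exact ⟨t, hbt, .left hat⟩
    | right hu =>
      obtain ⟨t, hbt, hat⟩ := ih hu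
      exact ⟨_, .left hbt, .right hat⟩
  | right _ ih =>
    obtain ⟨t, hbt, hat⟩ := ih hu
    exact ⟨_, .right hbt, .right hat⟩

theorem filter_or (p r : α → Bool) (hpr : ∀ a, p a → r a → False) (w : List α) :
    Shuffle (w.filter p) (w.filter r) (w.filter fun a => p a || r a) := by
  induction w with
  | nil => exact .nil
  | cons c w ih =>
    cases hp : p c <;> cases hr : r c
    · simpa [filter_cons, hp, hr] using ih
    · simpa [filter_cons, hp, hr] using ih.right
    · simpa [filter_cons, hp, hr] using ih.left
    · exact (hpr c hp hr).elim

end Shuffle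

theorem List.Sublist.exists_shuffle {α : Type*} {u w : List α} (h : u <+ w) :
    ∃ v, Shuffle u v w := by
  induction h with
  | slnil => exact ⟨[], .nil⟩
  | cons a _ ih =>
    obtain ⟨v, hv⟩ := ih
    exact ⟨a :: v, .right hv⟩
  | cons_cons a _ ih =>
    obtain ⟨v, hv⟩ := ih
    exact ⟨v, .left hv⟩

theorem List.cons_replicate_sublist_or_replicate_append_sublist {α : Type*} [BEq α] [LawfulBEq α]
    {i j : α} (hij : i ≠ j) {a b : ℕ} {w : List α} (hi : i ∈ w) (hj : a + b ≤ w.count j) :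
    i :: replicate a j <+ w ∨ replicate b j ++ [i] <+ w := by
  obtain ⟨s, t, rfl⟩ := append_of_mem hi
  have hst : (s ++ i :: t).count j = s.count j + t.count j := by
    simp [count_append, hij]
  by_cases ht : a ≤ t.count j
  · exact .inl (((replicate_sublist_iff.2 ht).cons_cons i).trans (sublist_append_right s _))
  · exact .inr ((replicate_sublist_iff.2 (by omega)).append (singleton_sublist.2 mem_cons_self))

namespace IterShuffle

variable {α : Type*} {S : Set (List α)} {u v w : List α}

theorem of_mem (hu : u ∈ S) : IterShuffle S u :=
  .step hu .nil (Shuffle.nil_right u)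

theorem shuffle (hu : IterShuffle S u) (hv : IterShuffle S v) (h : Shuffle u v w) :
    IterShuffle S w := by
  induction hu generalizing v w with
  | nil => exact h.eq_of_nil_left ▸ hv
  | step hu₀ _ hsh ih =>
    obtain ⟨t, hbt, hat⟩ := h.exists_assoc hsh
    exact .step hu₀ (ih hv hbt) hat

theorem append (hu : IterShuffle S u) (hv : IterShuffle S v) : IterShuffle S (u ++ v) :=
  hu.shuffle hv (by simpa using (Shuffle.nil_right u).append (Shuffle.nil_left v))

theorem exists_mem_sublist_of_mem {c : α} (h : IterShuffle S w) (hc : c ∈ w) :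
    ∃ u ∈ S, u <+ w ∧ c ∈ u := by
  induction h with
  | nil => simp at hc
  | step hu _ hsh ih =>
    rcases mem_append.1 (hsh.perm_append.mem_iff.2 hc) with hcu | hcw
    · exact ⟨_, hu, hsh.sublist_left, hcu⟩
    · obtain ⟨u', hu'S, hu'w, hcu'⟩ := ih hcw
      exact ⟨u', hu'S, hu'w.trans hsh.sublist_right, hcu'⟩

theorem replicate_of_mem_closure {i : α} {n : ℕ}
    (hn : n ∈ AddSubmonoid.closure {k | replicate k i ∈ S}) :
    IterShuffle S (replicate n i) := by
  induction hn using AddSubmonoid.closure_induction with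
  | mem k hk => exact of_mem hk
  | zero => exact .nil
  | add m n _ _ hm hn => rw [replicate_add]; exact hm.append hn

theorem dvd_of_replicate {i : α} {d n : ℕ} (h : IterShuffle S (replicate n i))
    (hd : ∀ k ≤ n, replicate k i ∈ S → d ∣ k) : d ∣ n := by
  generalize hy : replicate n i = y at h
  induction h generalizing n with
  | nil => simp [(replicate_eq_nil_iff _).1 hy]
  | step hu _ hsh ih =>
    subst hy
    obtain ⟨s, -, rfl⟩ := sublist_replicate_iff.1 hsh.sublist_left
    obtain ⟨t, -, rfl⟩ := sublist_replicate_iff.1 hsh.sublist_right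
    have hn : n = s + t := by simpa using hsh.perm_append.length_eq.symm
    subst hn
    exact dvd_add (hd s (by omega) hu) (ih (fun k hk => hd k (by omega)) rfl)

theorem of_forall_replicate_count [DecidableEq α]
    (h : ∀ a ∈ w, IterShuffle S (replicate (w.count a) a)) : IterShuffle S w := by
  suffices ∀ T : Finset α, (∀ a ∈ T, a ∈ w) → IterShuffle S (w.filter (· ∈ T)) by
    simpa [filter_eq_self.2] using this w.toFinset (by simp)
  intro T
  induction T using Finset.induction_on with
  | empty => intro; simpa using IterShuffle.nil
  | insert a T ha ih =>
    intro hT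
    have hsplit := Shuffle.filter_or (fun x => x = a) (· ∈ T) (by simp +contextual [ha]) w
    rw [filter_eq] at hsplit
    refine (h a (hT a (by simp))).shuffle (ih fun b hb => hT b (by simp [hb])) ?_
    simpa [Finset.mem_insert] using hsplit

theorem of_absorb [DecidableEq α] {j : α} {P : Finset α} {a b : α → ℕ} {C T : ℕ} (hjP : j ∉ P)
    (hmix : ∀ i ∈ P, i :: replicate (a i) j ∈ S ∧ replicate (b i) j ++ [i] ∈ S)
    (hC : ∀ i ∈ P, a i + b i ≤ C) (hT : ∀ n, T ≤ n → IterShuffle S (replicate n j))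
    (w : List α) (hrest : ∀ k ∉ P, k ≠ j → IterShuffle S (replicate (w.count k) k))
    (hw : T + C * ∑ i ∈ P, w.count i ≤ w.count j) : IterShuffle S w := by
  induction hN : ∑ i ∈ P, w.count i generalizing w with
  | zero =>
    refine of_forall_replicate_count fun k _ => ?_
    by_cases hkP : k ∈ P
    · rw [Finset.sum_eq_zero_iff.1 hN k hkP]
      exact .nil
    by_cases hkj : k = j
    · subst hkj
      exact hT _ (by omega)
    exact hrest k hkP hkj
  | succ N ih =>
    obtain ⟨i, hiP, hi⟩ := Finset.exists_ne_zero_of_sum_ne_zero (by rw [hN]; exact N.succ_ne_zero)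
    have hij : i ≠ j := ne_of_mem_of_not_mem hiP hjP
    obtain ⟨u, huS, huw, n, hnC, hu⟩ : ∃ u ∈ S, u <+ w ∧ ∃ n ≤ C, u ~ i :: replicate n j := by
      have hab := hC i hiP
      rcases cons_replicate_sublist_or_replicate_append_sublist hij
        (count_pos_iff.1 (Nat.pos_of_ne_zero hi)) (show a i + b i ≤ w.count j by nlinarith)
        with h | h
      · exact ⟨_, (hmix i hiP).1, h, a i, by omega, .rfl⟩
      · exact ⟨_, (hmix i hiP).2, h, b i, by omega, perm_append_singleton _ _⟩
    obtain ⟨w', hw'⟩ := huw.exists_shuffle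
    have hcount (k : α) :
        w.count k = (if k = i then 1 else 0) + (if k = j then n else 0) + w'.count k := by
      rw [← hw'.perm_append.count_eq, count_append, hu.count_eq]
      simp only [count_cons, count_replicate, beq_iff_eq, eq_comm (a := i), eq_comm (a := j)]
      ring
    have hsum : ∑ k ∈ P, w.count k = 1 + ∑ k ∈ P, w'.count k := by
      rw [Finset.sum_congr rfl fun k _ => hcount k, Finset.sum_add_distrib, Finset.sum_add_distrib,
        Finset.sum_ite_eq' P i, Finset.sum_ite_eq' P j]
      simp [hiP, hjP]
    refine .step huS (ih w' (fun k hkP hkj => ?_) ?_ (by omega)) hw'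
    · have hki : k ≠ i := fun h => hkP (h ▸ hiP)
      simpa [hcount k, hki, hkj] using hrest k hkP hkj
    · have hj := hcount j
      rw [hsum, mul_add, mul_one] at hw
      simp only [if_neg hij.symm, if_pos, zero_add] at hj
      omega

end IterShuffle

theorem Finset.two_le_card_of_gcd_eq_one {M : Finset ℕ} (hM : ∀ m ∈ M, 2 ≤ m)
    (hgcd : M.gcd id = 1) : 2 ≤ M.card := by
  obtain ⟨m, hm⟩ : M.Nonempty := Finset.nonempty_iff_ne_empty.2 (by rintro rfl; simp at hgcd)
  by_contra hcard
  have hM1 : M = {m} := Finset.eq_singleton_iff_unique_mem.2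
    ⟨hm, fun x hx => Finset.card_le_one.1 (by omega) x hx m hm⟩
  have := hM m hm
  simp [hM1] at hgcd
  omega

theorem exists_powers_of_iterShuffle_replicate {α : Type*} {S : Set (List α)} {i : α}
    (hi : [i] ∉ S) {n : ℕ} (hn : IterShuffle S (replicate n i))
    (hn' : IterShuffle S (replicate (n + 1) i)) :
    ∃ M : Finset ℕ, 2 ≤ M.card ∧ (∀ m ∈ M, 2 ≤ m) ∧ M.gcd id = 1 ∧
      ∀ m ∈ M, replicate m i ∈ S := by
  classical
  -- A factorization of `x_i^k` only uses powers of length at most `k`, so `M` may be truncated.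
  set M := (Finset.Icc 2 (n + 1)).filter fun m => replicate m i ∈ S
  have hM : ∀ m ∈ M, 2 ≤ m := fun m hm => (Finset.mem_Icc.1 (Finset.mem_filter.1 hm).1).1
  have hdvd : ∀ k ≤ n + 1, replicate k i ∈ S → M.gcd id ∣ k
    | 0, _, _ => dvd_zero _
    | 1, _, hk => absurd hk hi
    | k + 2, hk, hkS => Finset.gcd_dvd (by simp [M, hkS]; omega)
  have hgcd : M.gcd id = 1 := Nat.dvd_one.1 <|
    (Nat.dvd_add_right (hn.dvd_of_replicate fun k hk => hdvd k (by omega))).1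
      (hn'.dvd_of_replicate hdvd)
  exact ⟨M, Finset.two_le_card_of_gcd_eq_one hM hgcd, hM, hgcd,
    fun m hm => (Finset.mem_filter.1 hm).2⟩

section MixedWords

variable {α : Type*} {S : Set (List α)} {i j : α}

theorem exists_cons_replicate_mem_of_iterShuffle (hij : i ≠ j) (hi : [i] ∉ S) {n : ℕ}
    (h : IterShuffle S (i :: replicate n j)) : ∃ a, 1 ≤ a ∧ i :: replicate a j ∈ S := by
  obtain ⟨u, huS, hu, hiu⟩ := h.exists_mem_sublist_of_mem mem_cons_self
  rcases sublist_cons_iff.1 hu with hu | ⟨r, rfl, hr⟩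
  · exact absurd (eq_of_mem_replicate (hu.subset hiu)) hij
  · obtain ⟨a, -, rfl⟩ := sublist_replicate_iff.1 hr
    exact ⟨a, Nat.one_le_iff_ne_zero.2 (by rintro rfl; exact hi huS), huS⟩

theorem exists_replicate_append_mem_of_iterShuffle (hij : i ≠ j) (hi : [i] ∉ S) {n : ℕ}
    (h : IterShuffle S (replicate n j ++ [i])) : ∃ b, 1 ≤ b ∧ replicate b j ++ [i] ∈ S := by
  obtain ⟨u, huS, hu, hiu⟩ :=
    h.exists_mem_sublist_of_mem (mem_append_right _ (mem_singleton_self i))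
  obtain ⟨r, s, rfl, hr, hs⟩ := sublist_append_iff.1 hu
  obtain ⟨b, -, rfl⟩ := sublist_replicate_iff.1 hr
  rcases sublist_singleton.1 hs with rfl | rfl
  · exact absurd (eq_of_mem_replicate (by simpa using hiu)) hij
  · exact ⟨b, Nat.one_le_iff_ne_zero.2 (by rintro rfl; exact hi huS), huS⟩

end MixedWords

theorem tiNonempty_of_forall_lt_length {q : ℕ} {S : Set (List (Fin q))} {L : ℕ}
    (hL : ∀ w : List (Fin q), L < w.length → IterShuffle S w) (i : Fin q) : TiNonempty S i := by
  by_cases hi : [i] ∈ S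
  · exact .inl hi
  obtain ⟨M, hcard, hM, hgcd, hMS⟩ :=
    exists_powers_of_iterShuffle_replicate hi (n := L + 1) (hL _ (by simp)) (hL _ (by simp))
  have hmixed (j : Fin q) : ∃ a b, j ≠ i →
      1 ≤ a ∧ 1 ≤ b ∧ i :: replicate a j ∈ S ∧ replicate b j ++ [i] ∈ S := by
    by_cases hji : j = i
    · exact ⟨0, 0, fun h => (h hji).elim⟩
    obtain ⟨a, ha, haS⟩ := exists_cons_replicate_mem_of_iterShuffle (Ne.symm hji) hi
      (hL (i :: replicate L j) (by simp))
    obtain ⟨b, hb, hbS⟩ := exists_replicate_append_mem_of_iterShuffle (Ne.symm hji) hi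
      (hL (replicate L j ++ [i]) (by simp))
    exact ⟨a, b, fun _ => ⟨ha, hb, haS, hbS⟩⟩
  choose a b hab using hmixed
  exact .inr ⟨M, a, b, hcard, hM, hgcd, hMS, hab⟩

theorem TiNonempty.exists_threshold {q : ℕ} {S : Set (List (Fin q))} {i : Fin q}
    (h : TiNonempty S i) :
    ∃ (F : ℕ) (a b : Fin q → ℕ), (∀ n, F ≤ n → IterShuffle S (replicate n i)) ∧
      (0 < F → ∀ j, j ≠ i → i :: replicate (a j) j ∈ S ∧ replicate (b j) j ++ [i] ∈ S) := by
  rcases h with hi | ⟨M, a, b, -, -, hgcd, hMS, hmix⟩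
  · refine ⟨0, 0, 0, fun n _ => IterShuffle.replicate_of_mem_closure ?_, by omega⟩
    have h1 : 1 ∈ AddSubmonoid.closure {k | replicate k i ∈ S} := AddSubmonoid.subset_closure hi
    simpa using nsmul_mem h1 n
  · obtain ⟨F, hF⟩ := Nat.exists_mem_closure_of_ge (M : Set ℕ)
    have hdvd (n : ℕ) : Nat.setGcd M ∣ n :=
      (Finset.dvd_gcd fun m hm => Nat.setGcd_dvd_of_mem hm).trans (hgcd ▸ one_dvd n)
    refine ⟨F, a, b, fun n hn => IterShuffle.replicate_of_mem_closure ?_,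
      fun _ j hj => ⟨(hmix j hj).2.2.1, (hmix j hj).2.2.2⟩⟩
    exact AddSubmonoid.closure_mono (fun m hm => hMS m hm) (hF n hn (hdvd n))

theorem iterShuffle_cofinite_of_forall_tiNonempty {q : ℕ} {S : Set (List (Fin q))}
    (h : ∀ i, TiNonempty S i) : {w : List (Fin q) | ¬ IterShuffle S w}.Finite := by
  classical
  choose F a b hF hmix using fun i => (h i).exists_threshold
  set G := ∑ i, F i
  set C := ∑ i, ∑ j, (a i j + b i j)
  have hFG (i : Fin q) : F i ≤ G := Finset.single_le_sum (by simp) (Finset.mem_univ i)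
  have hC (i j : Fin q) : a i j + b i j ≤ C :=
    (Finset.single_le_sum (f := fun j => a i j + b i j) (by simp) (Finset.mem_univ j)).trans
      (Finset.single_le_sum (f := fun i => ∑ j, (a i j + b i j)) (by simp) (Finset.mem_univ i))
  refine (List.finite_length_le (Fin q) (q * (G + C * G))).subset fun w hw => ?_
  by_contra hlong
  simp only [Set.mem_ofPred_eq, not_le] at hw hlong
  have hlength : ∑ _k : Fin q, (G + C * G) < ∑ k, w.count k := by
    simpa [← Multiset.coe_count] using hlong
  obtain ⟨j, -, hj⟩ := Finset.exists_lt_of_sum_lt hlength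
  set P := Finset.univ.filter fun i => w.count i < F i
  have hjP : j ∉ P := by
    simp only [P, Finset.mem_filter, Finset.mem_univ, true_and, not_lt]
    exact (hFG j).trans (by omega)
  have hPG : ∑ i ∈ P, w.count i ≤ G :=
    (Finset.sum_le_sum fun i hi => (Finset.mem_filter.1 hi).2.le).trans
      (Finset.sum_le_sum_of_subset (Finset.subset_univ P))
  refine hw (IterShuffle.of_absorb (a := fun i => a i j) (b := fun i => b i j) hjP
    (fun i hi => hmix i (by simp [P] at hi; omega) j (ne_of_mem_of_not_mem hi hjP).symm)
    (fun i _ => hC i j) (hF j) w (fun k hkP _ => hF k _ (by simpa [P] using hkP)) ?_)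
  calc F j + C * ∑ i ∈ P, w.count i ≤ G + C * G := by gcongr; exact hFG j
    _ ≤ w.count j := hj.le

theorem cofinite_iff_Ti_nonempty_general (q : ℕ)
    (S : Set (List (Fin q))) :
    {w : List (Fin q) | ¬ IterShuffle S w}.Finite ↔ ∀ i : Fin q, TiNonempty S i := by
  refine ⟨fun hfin => ?_, iterShuffle_cofinite_of_forall_tiNonempty⟩
  obtain ⟨L, hL⟩ := (hfin.image length).bddAbove
  exact tiNonempty_of_forall_lt_length fun w hw =>
    by_contra fun hw' => (hL ⟨w, hw', rfl⟩).not_gt hw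

/-- **Theorem (characterization of co-finiteness).**
For `q ≥ 1` and a finite set `S` of words over the alphabet `{x₁, …, x_q}`,
the iterated shuffle `S^†` is co-finite if and only if for each `i` the
collection `𝒯ᵢ` is non-empty. -/
theorem cofinite_iff_Ti_nonempty (q : ℕ) (hq : 1 ≤ q)
    (S : Set (List (Fin q))) (hS : S.Finite) :
    {w : List (Fin q) | ¬ IterShuffle S w}.Finite ↔ ∀ i : Fin q, TiNonempty S i :=
  cofinite_iff_Ti_nonempty_general q S
end

section
/- Let q ≥ 1 and let S be a finite set of words over the alphabet Σ = {x_1, …, x_q} such that S^† is co-finite. If the length of a shortest word in S is 2, then |S| ≥ q² + q. -/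
/-!
Classify the words of `S` by their first and last letters. For letters `a ≠ b` some `aⁿb` lies in
`S^†`; a word of `S` that is a sublist of `aⁿb` and contains `b` is `aⁱb` with `i ≥ 1`, since `S`
has no word of length one. So each of the `q² - q` classes `(a, b)` with `a ≠ b` is nonempty. If `S`
contained at most one power `aᵏ` of a letter `a` (necessarily `k ≠ 1`), every power of `a` in `S^†`
would have length divisible by `k`; but `aᴺ` and `aᴺ⁺¹` both lie in `S^†` for large `N`. So each of
the `q` classes `(a, a)` has at least two words.
-/

open Filter Function Finset

theorem Finset.sum_card_filter_eq_le {ι κ γ : Type*} [DecidableEq κ] [Fintype γ]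
    (s : Finset ι) (f : ι → κ) {g : γ → κ} (hg : Injective g) :
    ∑ c, #{x ∈ s | f x = g c} ≤ #s := by
  have := Finset.sum_fiberwise_le_sum_of_sum_fiber_nonneg (s := s) (t := univ.map ⟨g, hg⟩)
    (g := f) (f := fun _ => 1) (by simp)
  simpa only [Finset.sum_map, ← Finset.card_eq_sum_ones, Embedding.coeFn_mk] using this

theorem Fintype.sum_one_add_ite_eq (α : Type*) [Fintype α] [DecidableEq α] :
    ∑ p : α × α, (1 + if p.1 = p.2 then 1 else 0) = Fintype.card α ^ 2 + Fintype.card α := by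
  rw [Finset.sum_add_distrib, Fintype.sum_prod_type fun p : α × α => if p.1 = p.2 then 1 else 0]
  simp [sq]

variable {α : Type*} {S : Set (List α)}

theorem Shuffle.perm_append_s5 {u v w : List α} (h : Shuffle u v w) : (u ++ v).Perm w := by
  induction h with
  | nil => rfl
  | left _ ih => exact ih.cons _
  | right _ ih => exact List.perm_middle.trans (ih.cons _)

theorem Shuffle.sublist_left_s5 {u v w : List α} (h : Shuffle u v w) : u.Sublist w := by
  induction h with
  | nil => rfl
  | left _ ih => exact ih.cons_cons _
  | right _ ih => exact ih.cons _

theorem Shuffle.sublist_right_s5 {u v w : List α} (h : Shuffle u v w) : v.Sublist w := by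
  induction h with
  | nil => rfl
  | left _ ih => exact ih.cons _
  | right _ ih => exact ih.cons_cons _

theorem IterShuffle.exists_mem_sublist_of_mem_s5 {y : List α} (hy : IterShuffle S y) {b : α}
    (hb : b ∈ y) : ∃ u ∈ S, u.Sublist y ∧ b ∈ u := by
  induction hy with
  | nil => simp at hb
  | step hu _ hs ih =>
    rcases List.mem_append.mp (hs.perm_append_s5.mem_iff.mpr hb) with hbu | hbw
    · exact ⟨_, hu, hs.sublist_left_s5, hbu⟩
    · obtain ⟨u', hu', hsub, hbu'⟩ := ih hbw
      exact ⟨u', hu', hsub.trans hs.sublist_right_s5, hbu'⟩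

theorem IterShuffle.dvd_length {p : α → Prop} {k : ℕ}
    (hS : ∀ u ∈ S, (∀ c ∈ u, p c) → k ∣ u.length) {y : List α} (hy : IterShuffle S y)
    (hp : ∀ c ∈ y, p c) : k ∣ y.length := by
  induction hy with
  | nil => simp
  | step hu _ hs ih =>
    rw [← hs.perm_append_s5.length_eq, List.length_append]
    exact dvd_add (hS _ hu fun c hc => hp c (hs.sublist_left_s5.subset hc))
      (ih fun c hc => hp c (hs.sublist_right_s5.subset hc))

theorem eventually_iterShuffle (hcof : {w | ¬ IterShuffle S w}.Finite) {f : ℕ → List α}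
    (hf : Injective f) : ∀ᶠ n in atTop, IterShuffle S (f n) :=
  Nat.cofinite_eq_atTop ▸ hf.tendsto_cofinite.eventually (mem_cofinite.mpr hcof)

theorem exists_replicate_append_mem (hcof : {w | ¬ IterShuffle S w}.Finite) {a b : α}
    (hab : a ≠ b) (hb : [b] ∉ S) : ∃ i, List.replicate (i + 1) a ++ [b] ∈ S := by
  have hinj : Injective fun n => List.replicate n a ++ [b] := fun m n h => by
    simpa using congrArg List.length h
  obtain ⟨n, hn⟩ := (eventually_iterShuffle hcof hinj).exists
  obtain ⟨u, hu, hsub, hbu⟩ := hn.exists_mem_sublist_of_mem_s5 (b := b) (by simp)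
  obtain ⟨l, r, rfl, hl, hr⟩ := List.sublist_append_iff.mp hsub
  obtain ⟨i, -, rfl⟩ := List.sublist_replicate_iff.mp hl
  rcases List.sublist_singleton.mp hr with rfl | rfl
  · exact absurd (List.eq_of_mem_replicate (by simpa using hbu)) hab.symm
  · obtain _ | i := i
    · exact absurd hu hb
    · exact ⟨i, hu⟩

theorem nontrivial_replicate_mem (hcof : {w | ¬ IterShuffle S w}.Finite) {a : α}
    (ha : [a] ∉ S) : {n | List.replicate n a ∈ S}.Nontrivial := by
  by_contra htriv
  obtain ⟨k, hk1, hk⟩ : ∃ k ≠ 1, ∀ n, List.replicate n a ∈ S → k ∣ n := by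
    rcases (Set.not_nontrivial_iff.mp htriv).eq_empty_or_singleton with h | ⟨k, h⟩
    · simp only [Set.eq_empty_iff_forall_notMem, Set.mem_ofPred_eq] at h
      exact ⟨0, zero_ne_one, fun n hn => absurd hn (h n)⟩
    · simp only [Set.ext_iff, Set.mem_ofPred_eq, Set.mem_singleton_iff] at h
      exact ⟨k, fun hk => ha ((h 1).mpr hk.symm), fun n hn => (h n).mp hn ▸ dvd_rfl⟩
  have hS : ∀ u ∈ S, (∀ c ∈ u, c = a) → k ∣ u.length := fun u hu hp =>
    hk _ (List.eq_replicate_iff.mpr ⟨rfl, hp⟩ ▸ hu)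
  obtain ⟨N, hN⟩ :=
    eventually_atTop.mp (eventually_iterShuffle hcof (List.replicate_left_injective a))
  have hdvd : ∀ n ≥ N, k ∣ n := fun n hn => by
    simpa using (hN n hn).dvd_length hS fun c => List.eq_of_mem_replicate
  exact hk1 (Nat.dvd_one.mp ((Nat.dvd_add_right (hdvd N le_rfl)).mp (hdvd (N + 1) (by omega))))

theorem one_add_ite_le_card_filter_head_getLast {T : Finset (List α)}
    (hcof : {w | ¬ IterShuffle (T : Set (List α)) w}.Finite)
    (hmin : ∀ w ∈ T, 2 ≤ w.length) [DecidableEq α] (a b : α) :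
    (1 + if a = b then 1 else 0) ≤ #{w ∈ T | (w.head?, w.getLast?) = (some a, some b)} := by
  have hsingle : ∀ c, [c] ∉ T := fun c hc => by simpa using hmin _ hc
  split_ifs with hab
  · subst hab
    obtain ⟨m, hm, n, hn, hmn⟩ := nontrivial_replicate_mem hcof (hsingle a)
    have hfiber : ∀ k, List.replicate k a ∈ T →
        List.replicate k a ∈ ({w ∈ T | (w.head?, w.getLast?) = (some a, some a)} : Finset _) :=
      fun k hk => by
        have hk0 : k ≠ 0 := by
          rintro rfl
          simpa using hmin _ hk
        simp [hk, List.head?_replicate, List.getLast?_replicate, hk0]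
    exact Finset.one_lt_card.mpr ⟨_, hfiber m hm, _, hfiber n hn,
      (List.replicate_left_injective a).ne hmn⟩
  · obtain ⟨i, hi⟩ := exists_replicate_append_mem hcof hab (hsingle b)
    exact Finset.card_pos.mpr ⟨_, Finset.mem_filter.mpr ⟨hi, by simp [List.head?_replicate]⟩⟩

theorem card_ge_of_min_two_general (q : ℕ)
    (S : Set (List (Fin q))) (hS : S.Finite)
    (hcof : {w : List (Fin q) | ¬ IterShuffle S w}.Finite)
    (hmin : ∀ w ∈ S, 2 ≤ w.length) :
    q ^ 2 + q ≤ S.ncard := by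
  obtain ⟨T, rfl⟩ := hS.exists_finset_coe
  have hends : Injective fun p : Fin q × Fin q => (some p.1, some p.2) := fun p p' h => by
    simpa [Prod.ext_iff] using h
  calc q ^ 2 + q = ∑ p : Fin q × Fin q, (1 + if p.1 = p.2 then 1 else 0) := by
        simpa using (Fintype.sum_one_add_ite_eq (Fin q)).symm
    _ ≤ ∑ p : Fin q × Fin q, #{w ∈ T | (w.head?, w.getLast?) = (some p.1, some p.2)} :=
        Finset.sum_le_sum fun p _ => one_add_ite_le_card_filter_head_getLast hcof hmin p.1 p.2
    _ ≤ #T := Finset.sum_card_filter_eq_le T _ hends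
    _ = (T : Set (List (Fin q))).ncard := (Set.ncard_coe_finset T).symm

/-- If `q ≥ 1`, `S` is a finite set of words over a `q`-letter alphabet such that
`S^†` is co-finite, and the length of a shortest word of `S` is `2`, then
`|S| ≥ q² + q`. -/
theorem card_ge_of_min_two (q : ℕ) (hq : 1 ≤ q)
    (S : Set (List (Fin q))) (hS : S.Finite)
    (hcof : {w : List (Fin q) | ¬ IterShuffle S w}.Finite)
    (hmem : ∃ w ∈ S, w.length = 2) (hmin : ∀ w ∈ S, 2 ≤ w.length) :
    q ^ 2 + q ≤ S.ncard :=
  card_ge_of_min_two_general q S hS hcof hmin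
end

section
/- Let q ≥ 1 and let S be a finite set of words over the alphabet Σ = {x_1, …, x_q} such that S^† is co-finite. If the length of a shortest word in S is at least 3, then |S| ≥ 2q². -/
/-!
Every letter of a word of `S^†` is contributed by a word of `S` that is a subword (scattered
sublist) of it. By co-finiteness `S^†` contains `aⁿb` and `baⁿ` for some `n`, and the word of `S`
contributing the `b` is then of the form `aⁱb`, resp. `baʲ`, with `i ≥ 2`, `j ≥ 1` by the length
bound. If all pure powers of `a` in `S` had lengths divisible by a single `p ≥ 2`, so would all
pure powers of `a` in `S^†`, contradicting co-finiteness; hence `S` contains two powers of `a` of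
different lengths. The `2q + 2q(q - 1) = 2q²` words found this way are told apart by `pairKey`.
-/

open List

namespace Shuffle

variable {α : Type*} {u v w : List α}

theorem length_eq (h : Shuffle u v w) : w.length = u.length + v.length := by
  induction h with
  | nil => rfl
  | left _ ih | right _ ih => simp only [length_cons, ih]; omega

theorem mem_or_mem (h : Shuffle u v w) {x : α} (hx : x ∈ w) : x ∈ u ∨ x ∈ v := by
  induction h <;> simp only [mem_cons, not_mem_nil] at * <;> tauto

end Shuffle

namespace IterShuffle

variable {α : Type*} {S : Set (List α)} {y : List α}

theorem exists_mem_sublist (h : IterShuffle S y) {b : α} (hb : b ∈ y) :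
    ∃ u ∈ S, u <+ y ∧ b ∈ u := by
  induction h with
  | nil => simp at hb
  | step hu _ hsh ih =>
    rcases hsh.mem_or_mem hb with hb | hb
    · exact ⟨_, hu, hsh.sublist_left, hb⟩
    · obtain ⟨u, huS, hsub, hbu⟩ := ih hb
      exact ⟨u, huS, hsub.trans hsh.sublist_right, hbu⟩

theorem dvd_length_s6 {a : α} {p : ℕ} (hS : ∀ u ∈ S, (∀ x ∈ u, x = a) → p ∣ u.length)
    (h : IterShuffle S y) (hy : ∀ x ∈ y, x = a) : p ∣ y.length := by
  induction h with
  | nil => simp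
  | step hu _ hsh ih =>
    rw [hsh.length_eq]
    exact dvd_add (hS _ hu fun x hx => hy x (hsh.sublist_left.subset hx))
      (ih fun x hx => hy x (hsh.sublist_right.subset hx))

end IterShuffle

theorem List.exists_eq_cons_replicate_of_sublist {α : Type*} {a b : α} {n : ℕ} {u : List α}
    (hab : a ≠ b) (h : u <+ b :: replicate n a) (hb : b ∈ u) : ∃ j, u = b :: replicate j a := by
  rcases sublist_cons_iff.1 h with hu | ⟨u', rfl, hu'⟩
  · exact absurd (eq_of_mem_replicate (hu.subset hb)) hab.symm
  · obtain ⟨j, -, rfl⟩ := sublist_replicate_iff.1 hu'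
    exact ⟨j, rfl⟩

section PairKey

variable {α : Type*} [DecidableEq α]

/-- Sends `aⁿ` (`n ≥ 2`) to `(a, a)`, and both `aⁱb` (`i ≥ 2`) and `baʲ` (`j ≥ 1`) to `(a, b)`. -/
def pairKey (w : List α) : Option α × Option α :=
  (w[1]?, if w[0]? = w[1]? then w.getLast? else w[0]?)

theorem pairKey_replicate {n : ℕ} (hn : 2 ≤ n) (a : α) :
    pairKey (replicate n a) = (some a, some a) := by
  simp [pairKey, getElem?_replicate, getLast?_replicate, show 1 < n by omega, show n ≠ 0 by omega]

theorem pairKey_replicate_append_singleton {i : ℕ} (hi : 2 ≤ i) (a b : α) :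
    pairKey (replicate i a ++ [b]) = (some a, some b) := by
  obtain ⟨i, rfl⟩ := Nat.exists_eq_add_of_le' hi
  simp [pairKey, replicate_succ, getLast?_cons]

theorem pairKey_cons_replicate {a b : α} (hab : a ≠ b) {j : ℕ} (hj : 1 ≤ j) :
    pairKey (b :: replicate j a) = (some a, some b) := by
  obtain ⟨j, rfl⟩ := Nat.exists_eq_add_of_le' hj
  simp [pairKey, replicate_succ, hab.symm]

end PairKey

section CoFinite

variable {α : Type*} {S : Set (List α)}

theorem exists_iterShuffle_of_injective (hcof : {w | ¬ IterShuffle S w}.Finite)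
    {f : ℕ → List α} (hf : f.Injective) : ∃ n, IterShuffle S (f n) := by
  obtain ⟨_, ⟨n, rfl⟩, hn⟩ := (Set.infinite_range_of_injective hf).exists_notMem_finite hcof
  exact ⟨n, not_not.1 hn⟩

theorem exists_cons_replicate_mem (hcof : {w | ¬ IterShuffle S w}.Finite) {a b : α}
    (hab : a ≠ b) : ∃ j, b :: replicate j a ∈ S := by
  obtain ⟨n, hn⟩ := exists_iterShuffle_of_injective hcof (f := fun n => b :: replicate n a)
    fun m n h => by simpa using h
  obtain ⟨u, huS, hsub, hbu⟩ := hn.exists_mem_sublist mem_cons_self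
  obtain ⟨j, rfl⟩ := exists_eq_cons_replicate_of_sublist hab hsub hbu
  exact ⟨j, huS⟩

theorem exists_replicate_append_singleton_mem (hcof : {w | ¬ IterShuffle S w}.Finite) {a b : α}
    (hab : a ≠ b) : ∃ i, replicate i a ++ [b] ∈ S := by
  obtain ⟨n, hn⟩ := exists_iterShuffle_of_injective hcof (f := fun n => replicate n a ++ [b])
    fun m n h => by simpa using h
  obtain ⟨u, huS, hsub, hbu⟩ := hn.exists_mem_sublist (mem_append_right _ (mem_singleton_self b))
  obtain ⟨i, hi⟩ := exists_eq_cons_replicate_of_sublist hab (by simpa using reverse_sublist.2 hsub)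
    (mem_reverse.2 hbu)
  refine ⟨i, ?_⟩
  rwa [← reverse_reverse u, hi, reverse_cons, reverse_replicate] at huS

theorem exists_two_replicate_mem (hcof : {w | ¬ IterShuffle S w}.Finite)
    (hmin : ∀ w ∈ S, 2 ≤ w.length) (a : α) :
    ∃ m n, m ≠ n ∧ replicate m a ∈ S ∧ replicate n a ∈ S := by
  by_contra! hunique
  obtain ⟨p, hp, hpS⟩ : ∃ p, 2 ≤ p ∧ ∀ u ∈ S, (∀ x ∈ u, x = a) → p ∣ u.length := by
    by_cases h : ∃ u ∈ S, ∀ x ∈ u, x = a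
    · obtain ⟨u₀, hu₀S, hu₀⟩ := h
      refine ⟨u₀.length, hmin u₀ hu₀S, fun u huS hu => dvd_of_eq ?_⟩
      by_contra hlen
      rw [eq_replicate_of_mem hu₀] at hu₀S
      rw [eq_replicate_of_mem hu] at huS
      exact hunique _ _ hlen hu₀S huS
    · push Not at h
      exact ⟨2, le_rfl, fun u huS hu => absurd hu (by simpa using h u huS)⟩
  obtain ⟨n, hn⟩ := exists_iterShuffle_of_injective hcof
    (f := fun n => replicate (n * p + 1) a) fun m n h => by simpa [show p ≠ 0 by omega] using h
  have hdvd : p ∣ n * p + 1 := by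
    simpa using hn.dvd_length_s6 hpS fun x => eq_of_mem_replicate
  have := Nat.le_of_dvd one_pos ((Nat.dvd_add_right (dvd_mul_left p n)).1 hdvd)
  omega

theorem exists_ne_mem_pairKey_eq [DecidableEq α] (hcof : {w | ¬ IterShuffle S w}.Finite)
    (hmin : ∀ w ∈ S, 3 ≤ w.length) (a b : α) :
    ∃ u ∈ S, ∃ v ∈ S, u ≠ v ∧ pairKey u = (some a, some b) ∧ pairKey v = (some a, some b) := by
  rcases eq_or_ne a b with rfl | hab
  · obtain ⟨m, n, hmn, hm, hn⟩ :=
      exists_two_replicate_mem hcof (fun w hw => (hmin w hw).trans' (by norm_num)) a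
    have hm3 := hmin _ hm
    have hn3 := hmin _ hn
    simp only [length_replicate] at hm3 hn3
    exact ⟨_, hm, _, hn, fun h => hmn (by simpa using congrArg length h),
      pairKey_replicate (by omega) a, pairKey_replicate (by omega) a⟩
  · obtain ⟨i, hi⟩ := exists_replicate_append_singleton_mem hcof hab
    obtain ⟨j, hj⟩ := exists_cons_replicate_mem hcof hab
    have hi3 := hmin _ hi
    have hj3 := hmin _ hj
    simp only [length_append, length_replicate, length_cons, length_nil] at hi3 hj3
    refine ⟨_, hi, _, hj, fun h => hab ?_, pairKey_replicate_append_singleton (by omega) a b,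
      pairKey_cons_replicate hab (by omega)⟩
    obtain ⟨i, rfl⟩ := Nat.exists_eq_add_of_le' (show 1 ≤ i by omega)
    simpa [replicate_succ] using congrArg head? h

end CoFinite

open scoped Finset

theorem Finset.mul_card_le_card_of_forall_le_card_fiber {β γ : Type*} [DecidableEq γ]
    (s : Finset β) (f : β → γ) (t : Finset γ) (n : ℕ)
    (h : ∀ c ∈ t, n ≤ #{x ∈ s | f x = c}) : n * #t ≤ #s :=
  calc n * #t ≤ #{x ∈ s | f x ∈ t} :=
        mul_card_image_le_card_of_maps_to (fun _ hx => (mem_filter.1 hx).2) n fun c hc => by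
          rw [filter_filter, filter_congr fun x _ => and_iff_right_of_imp fun hx => hx ▸ hc]
          exact h c hc
    _ ≤ #s := card_filter_le _ _

theorem card_ge_of_min_three_general (q : ℕ)
    (S : Set (List (Fin q))) (hS : S.Finite)
    (hcof : {w : List (Fin q) | ¬ IterShuffle S w}.Finite)
    (hmin : ∀ w ∈ S, 3 ≤ w.length) :
    2 * q ^ 2 ≤ S.ncard := by
  have hfiber (a b : Fin q) : 2 ≤ #{w ∈ hS.toFinset | pairKey w = (some a, some b)} := by
    obtain ⟨u, hu, v, hv, huv, hku, hkv⟩ := exists_ne_mem_pairKey_eq hcof hmin a b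
    exact Finset.one_lt_card.2 ⟨u, by simp [hu, hku], v, by simp [hv, hkv], huv⟩
  have hcount := Finset.mul_card_le_card_of_forall_le_card_fiber hS.toFinset pairKey
    (Finset.univ.image fun p : Fin q × Fin q => (some p.1, some p.2)) 2
    (Finset.forall_mem_image.2 fun p _ => hfiber p.1 p.2)
  rw [Finset.card_image_of_injective _ (fun p p' h => by simpa [Prod.ext_iff] using h),
    Finset.card_univ, Fintype.card_prod, Fintype.card_fin] at hcount
  rw [Set.ncard_eq_toFinset_card S hS, sq]
  exact hcount

/-- If `q ≥ 1`, `S` is a finite set of words over a `q`-letter alphabet such that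
`S^†` is co-finite, and the length of a shortest word of `S` is at least `3`,
then `|S| ≥ 2q²`. -/
theorem card_ge_of_min_three (q : ℕ) (hq : 1 ≤ q)
    (S : Set (List (Fin q))) (hS : S.Finite)
    (hcof : {w : List (Fin q) | ¬ IterShuffle S w}.Finite)
    (hne : S.Nonempty) (hmin : ∀ w ∈ S, 3 ≤ w.length) :
    2 * q ^ 2 ≤ S.ncard :=
  card_ge_of_min_three_general q S hS hcof hmin
end

section
/- Let q ≥ 1, let Σ = {x_1, …, x_q}, and let S = ⋃_{i=1}^q {x_i², x_i³} ∪ ⋃_{i ≠ j} {x_i x_j} (the prototypical set with m = 2). Then the length of a longest word over Σ not in S^† is exactly 2q − 1: the word x_1² x_2² ⋯ x_{q−1}² x_q is not in S^†, and every word over Σ of length at least 2q is in S^†. -/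
/-!
The set `S` is closed under permuting letters, so a word lies in `S^†` exactly when its multiset
of letters is a sum of multisets of words of `S`. When no letter occurs three times, only the
words of length two can occur in such a sum, so the length is even; the witness has odd length
and no letter occurring three times. Conversely, if `2 · |support| ≤ size`, a letter `a` occurring
exactly once forces some letter `b` to occur at least three times, and removing `a b` preserves
the inequality; once no letter occurs exactly once, every `x^n` with `n ≠ 1` is a sum of squares
and cubes.
-/

variable {α : Type*}

theorem Shuffle.perm {u v w : List α} (h : Shuffle u v w) : w.Perm (u ++ v) := by
  induction h with
  | nil => rfl
  | left _ ih => exact ih.cons _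
  | right _ ih => exact (ih.cons _).trans List.perm_middle.symm

theorem Shuffle.exists_of_perm_append [DecidableEq α] {w : List α} :
    ∀ {u v : List α}, w.Perm (u ++ v) → ∃ u' v', u'.Perm u ∧ v'.Perm v ∧ Shuffle u' v' w := by
  induction w with
  | nil =>
    intro u v h
    obtain ⟨rfl, rfl⟩ := List.append_eq_nil_iff.mp (List.Perm.nil_eq h).symm
    exact ⟨[], [], .rfl, .rfl, .nil⟩
  | cons a w ih =>
    intro u v h
    rcases List.mem_append.mp (h.subset List.mem_cons_self) with ha | ha
    · have hu := List.perm_cons_erase ha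
      obtain ⟨u', v', hu', hv', hs⟩ :=
        ih ((h.trans (hu.append_right v)).cons_inv)
      exact ⟨a :: u', v', (hu'.cons a).trans hu.symm, hv', hs.left⟩
    · have hv := List.perm_cons_erase ha
      obtain ⟨u', v', hu', hv', hs⟩ :=
        ih ((h.trans ((hv.append_left u).trans List.perm_middle)).cons_inv)
      exact ⟨u', a :: v', hu', (hv'.cons a).trans hv.symm, hs.right⟩

theorem IterShuffle.coe_mem_closure {S : Set (List α)} {w : List α} (h : IterShuffle S w) :
    (w : Multiset α) ∈ AddSubmonoid.closure ((↑) '' S) := by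
  induction h with
  | nil => exact zero_mem _
  | step hu _ hs ih =>
    rw [Multiset.coe_eq_coe.mpr hs.perm, ← Multiset.coe_add]
    exact add_mem (AddSubmonoid.subset_closure ⟨_, hu, rfl⟩) ih

theorem exists_flatten_of_mem_closure {S : Set (List α)} {m : Multiset α}
    (hm : m ∈ AddSubmonoid.closure ((↑) '' S)) :
    ∃ l : List (List α), (∀ u ∈ l, u ∈ S) ∧ m = l.flatten := by
  induction hm using AddSubmonoid.closure_induction with
  | mem _ hx =>
    obtain ⟨u, hu, rfl⟩ := hx
    exact ⟨[u], by simpa using hu, by simp⟩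
  | zero => exact ⟨[], by simp, rfl⟩
  | add _ _ _ _ ih₁ ih₂ =>
    obtain ⟨l₁, hl₁, rfl⟩ := ih₁
    obtain ⟨l₂, hl₂, rfl⟩ := ih₂
    refine ⟨l₁ ++ l₂, fun u hu => ?_, by simp⟩
    rcases List.mem_append.mp hu with hu | hu
    exacts [hl₁ u hu, hl₂ u hu]

theorem IterShuffle.of_perm_flatten [DecidableEq α] {S : Set (List α)}
    (hS : ∀ u v, u.Perm v → v ∈ S → u ∈ S) {l : List (List α)} (hl : ∀ u ∈ l, u ∈ S) :
    ∀ {w : List α}, w.Perm l.flatten → IterShuffle S w := by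
  induction l with
  | nil =>
    intro w hw
    rw [List.flatten_nil, List.perm_nil] at hw
    exact hw ▸ .nil
  | cons u l ih =>
    intro w hw
    obtain ⟨u', v', hu', hv', hs⟩ := Shuffle.exists_of_perm_append hw
    exact .step (hS u' u hu' (hl u List.mem_cons_self))
      (ih (fun x hx => hl x (List.mem_cons_of_mem u hx)) hv') hs

theorem IterShuffle.of_coe_mem_closure [DecidableEq α] {S : Set (List α)}
    (hS : ∀ u v, u.Perm v → v ∈ S → u ∈ S) {w : List α}
    (hw : (w : Multiset α) ∈ AddSubmonoid.closure ((↑) '' S)) : IterShuffle S w := by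
  obtain ⟨l, hl, hwl⟩ := exists_flatten_of_mem_closure hw
  exact IterShuffle.of_perm_flatten hS hl (Multiset.coe_eq_coe.mp hwl)

theorem Multiset.even_card_of_mem_closure {G : Set (Multiset α)} {m : Multiset α}
    (hG : ∀ g ∈ G, g ≤ m → Even (card g)) (hm : m ∈ AddSubmonoid.closure G) :
    Even (card m) := by
  suffices ∀ x ∈ AddSubmonoid.closure G, x ≤ m → Even (card x) from this m hm le_rfl
  intro x hx
  induction hx using AddSubmonoid.closure_induction with
  | mem g hg => exact hG g hg
  | zero => simp
  | add x y _ _ ihx ihy =>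
    intro hxy
    rw [card_add]
    exact (ihx (le_self_add.trans hxy)).add (ihy (le_add_self.trans hxy))

def protoSet (α : Type*) : Set (List α) :=
  {w | ∃ i : α, w = List.replicate 2 i ∨ w = List.replicate 3 i} ∪
    {w | ∃ i j : α, i ≠ j ∧ w = [i, j]}

def protoMonoid (α : Type*) : AddSubmonoid (Multiset α) :=
  AddSubmonoid.closure ((↑) '' protoSet α)

theorem mem_protoSet_of_perm {u v : List α} (h : u.Perm v) (hv : v ∈ protoSet α) :
    u ∈ protoSet α := by
  rcases hv with ⟨i, rfl | rfl⟩ | ⟨i, j, hij, rfl⟩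
  · exact .inl ⟨i, .inl (List.perm_replicate.mp h)⟩
  · exact .inl ⟨i, .inr (List.perm_replicate.mp h)⟩
  · obtain ⟨x, y, rfl⟩ : ∃ x y, u = [x, y] := by
      match u, h.length_eq with
      | [x, y], _ => exact ⟨x, y, rfl⟩
    exact .inr ⟨x, y, by simpa using h.nodup_iff.mpr (by simpa using hij), rfl⟩

theorem coe_mem_protoMonoid {u : List α} (hu : u ∈ protoSet α) :
    (u : Multiset α) ∈ protoMonoid α :=
  AddSubmonoid.subset_closure ⟨u, hu, rfl⟩

theorem replicate_mem_protoMonoid (a : α) {n : ℕ} (hn : n ≠ 1) :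
    Multiset.replicate n a ∈ protoMonoid α := by
  have two := coe_mem_protoMonoid (.inl ⟨a, .inl rfl⟩ : List.replicate 2 a ∈ protoSet α)
  have three := coe_mem_protoMonoid (.inl ⟨a, .inr rfl⟩ : List.replicate 3 a ∈ protoSet α)
  rw [Multiset.coe_replicate] at two three
  obtain ⟨k, rfl | rfl⟩ : ∃ k, n = k * 2 ∨ n = k * 2 + 3 := by
    rcases Nat.even_or_odd' n with ⟨k, rfl | rfl⟩
    · exact ⟨k, .inl (by ring)⟩
    · exact ⟨k - 1, .inr (by omega)⟩
  · rw [← Multiset.nsmul_replicate]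
    exact nsmul_mem two k
  · rw [Multiset.replicate_add, ← Multiset.nsmul_replicate]
    exact add_mem (nsmul_mem two k) three

theorem mem_protoMonoid_of_count_ne_one [DecidableEq α] {m : Multiset α}
    (h : ∀ a, m.count a ≠ 1) : m ∈ protoMonoid α := by
  rw [← Multiset.toFinset_sum_count_nsmul_eq m]
  refine sum_mem fun a _ => ?_
  rw [Multiset.nsmul_singleton]
  exact replicate_mem_protoMonoid a (h a)

theorem exists_three_le_count [DecidableEq α] {m : Multiset α} {a : α}
    (hm : 2 * m.toFinset.card ≤ Multiset.card m) (ha : m.count a = 1) :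
    ∃ b, 3 ≤ m.count b := by
  by_contra! h
  have ha' : a ∈ m.toFinset := by simp [← Multiset.count_pos, ha]
  have hrest : ∑ x ∈ m.toFinset.erase a, m.count x ≤ ∑ _x ∈ m.toFinset.erase a, 2 :=
    Finset.sum_le_sum fun x _ => by have := h x; omega
  rw [← Multiset.toFinset_sum_count_eq, ← Finset.add_sum_erase _ _ ha'] at hm
  rw [Finset.sum_const, Finset.card_erase_of_mem ha', smul_eq_mul] at hrest
  have := Finset.card_pos.mpr ⟨a, ha'⟩
  omega

theorem mem_protoMonoid_of_two_mul_card_toFinset_le [DecidableEq α] (m : Multiset α)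
    (hm : 2 * m.toFinset.card ≤ Multiset.card m) : m ∈ protoMonoid α := by
  induction m using Multiset.strongInductionOn with
  | _ m ih =>
  by_cases h : ∀ a, m.count a ≠ 1
  · exact mem_protoMonoid_of_count_ne_one h
  push Not at h
  obtain ⟨a, ha⟩ := h
  obtain ⟨b, hb⟩ := exists_three_le_count hm ha
  have hab : a ≠ b := by rintro rfl; omega
  obtain ⟨t, rfl⟩ := Multiset.exists_cons_of_mem (Multiset.count_pos.mp (by omega : 0 < m.count a))
  have hbt : b ∈ t := by
    rw [Multiset.count_cons_of_ne hab.symm] at hb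
    exact Multiset.count_pos.mp (by omega)
  obtain ⟨m', rfl⟩ := Multiset.exists_cons_of_mem hbt
  have ham' : a ∉ m' := by simpa [hab] using ha
  have hbm' : b ∈ m' := by
    rw [← Multiset.count_pos]
    rw [Multiset.count_cons_of_ne hab.symm, Multiset.count_cons_self] at hb
    omega
  have hpair : ({a, b} : Multiset α) ∈ protoMonoid α :=
    coe_mem_protoMonoid (.inr ⟨a, b, hab, rfl⟩)
  have hsplit : a ::ₘ b ::ₘ m' = {a, b} + m' := by simp
  rw [hsplit]
  refine add_mem hpair (ih m' ?_ ?_)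
  · exact (Multiset.lt_cons_self m' b).trans (Multiset.lt_cons_self _ a)
  · rw [Multiset.toFinset_cons, Multiset.toFinset_cons,
      Finset.insert_eq_of_mem (Multiset.mem_toFinset.mpr hbm'),
      Finset.card_insert_of_notMem (by simpa using ham'), Multiset.card_cons,
      Multiset.card_cons] at hm
    omega

theorem even_card_of_mem_protoMonoid [DecidableEq α] {m : Multiset α} (hm : m ∈ protoMonoid α)
    (h : ∀ a, m.count a ≤ 2) : Even (Multiset.card m) := by
  refine Multiset.even_card_of_mem_closure ?_ hm
  rintro _ ⟨u, ⟨i, rfl | rfl⟩ | ⟨i, j, -, rfl⟩, rfl⟩ hle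
  · simp
  · have := (Multiset.le_iff_count.mp hle i).trans (h i)
    simp at this
  · simp

theorem List.count_flatMap_replicate [DecidableEq α] (l : List α) (n : ℕ) (a : α) :
    (l.flatMap (List.replicate n)).count a = n * l.count a := by
  induction l with
  | nil => simp
  | cons b l ih =>
    simp only [List.flatMap_cons, List.count_append, List.count_replicate, ih, List.count_cons]
    split_ifs <;> simp_all [mul_add, add_comm]

theorem count_flatMap_replicate_two_append_le [DecidableEq α] {l : List α} {z : α}
    (h : (l ++ [z]).Nodup) (a : α) : (l.flatMap (List.replicate 2) ++ [z]).count a ≤ 2 := by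
  have := List.nodup_iff_count_le_one.mp h a
  rw [List.count_append] at this ⊢
  rw [List.count_flatMap_replicate]
  omega

theorem nodup_map_range_mod_append (q : ℕ) (hq : 1 ≤ q) :
    ((List.range (q - 1)).map (fun k => (⟨k % q, Nat.mod_lt k hq⟩ : Fin q)) ++
      [(⟨q - 1, Nat.sub_lt hq one_pos⟩ : Fin q)]).Nodup := by
  rw [List.nodup_append]
  refine ⟨List.nodup_range.map_on fun x hx y hy hxy => ?_, List.nodup_singleton _, ?_⟩
  · rw [List.mem_range] at hx hy
    simpa [Fin.ext_iff, Nat.mod_eq_of_lt (show x < q by omega),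
      Nat.mod_eq_of_lt (show y < q by omega)] using hxy
  · simp only [List.mem_map, List.mem_range, List.mem_singleton, Fin.ext_iff]
    rintro a ⟨k, hk, hka⟩ b hb
    rw [Nat.mod_eq_of_lt (show k < q by omega)] at hka
    omega

/-- For the prototypical set with `m = 2` over a `q`-letter alphabet (`q ≥ 1`),
the length of a longest word not in `S^†` is exactly `2q - 1`: the word
`x₁²x₂²⋯x_{q-1}²x_q` (of length `2q - 1`) is not in `S^†`, and every word of
length at least `2q` is in `S^†`. -/
theorem proto_m_two_longest (q : ℕ) (hq : 1 ≤ q)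
    (S : Set (List (Fin q)))
    (hS : S = {w | ∃ i : Fin q, w = List.replicate 2 i ∨ w = List.replicate 3 i} ∪
              {w | ∃ i j : Fin q, i ≠ j ∧ w = [i, j]})
    (y : List (Fin q))
    (hy : y = ((List.range (q - 1)).flatMap
            (fun k => List.replicate 2 (⟨k % q, Nat.mod_lt k (by omega)⟩ : Fin q)))
          ++ [(⟨q - 1, by omega⟩ : Fin q)]) :
    y.length = 2 * q - 1 ∧ ¬ IterShuffle S y ∧
    ∀ w : List (Fin q), 2 * q ≤ w.length → IterShuffle S w := by
  replace hS : S = protoSet (Fin q) := hS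
  subst hS
  rw [← List.flatMap_map] at hy
  have hlen : y.length = 2 * q - 1 := by
    simp only [hy, List.length_append, List.length_flatMap, List.length_replicate,
      List.map_const', List.sum_replicate, List.length_map, List.length_range, smul_eq_mul,
      List.length_singleton]
    omega
  refine ⟨hlen, fun h => ?_, fun w hw => ?_⟩
  · have heven := even_card_of_mem_protoMonoid h.coe_mem_closure
      fun a => by
        rw [Multiset.coe_count, hy]
        exact count_flatMap_replicate_two_append_le (nodup_map_range_mod_append q hq) a
    rw [Multiset.coe_card, hlen, Nat.even_iff] at heven
    omega
  · refine IterShuffle.of_coe_mem_closure (fun _ _ => mem_protoSet_of_perm) ?_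
    refine mem_protoMonoid_of_two_mul_card_toFinset_le _ ?_
    have := (w : Multiset (Fin q)).toFinset.card_le_univ
    simp only [Fintype.card_fin, Multiset.coe_card] at this ⊢
    omega
end
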